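/- Let G be a connected P5-free chordal bipartite graph with bipartition (A,B), |A| = |B|, maximum biclique (A1,B1), and NNO orderings A2 = (u_1,...,u_p), B2 = (v_1,...,v_q). If deg(u_g) ≥ g for all 1 ≤ g ≤ p and deg(v_h) ≥ h for all 1 ≤ h ≤ q, then G has a Hamiltonian path. -/

import Mathlib

/-!
In a connected `P₅`-free bipartite graph two vertices on the same side have a common neighbour
(a shortest path of length at least four would contain an induced `P₅`), and this forces the
neighbourhoods on each side to be nested. Hence every vertex of `A \ A1` sees only `B1`, and once
`B1 = (b₁, …, b_r)` is listed by non-increasing degree, `N(u_g)` is the prefix of length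
`deg u_g ≥ g`; symmetrically for `B \ B1` and `A1 = (a₁, …, a_m)`. The Hamiltonian path is
`u₁ b₁ … u_p b_p  a_{q+1} b_{p+1} … a_m b_r  a_q v_q … a₁ v₁`,
the middle block running inside the biclique and the lengths matching because `|A| = |B|`.
Writing it as the interleaving of an `A`-list `X` and a `B`-list `Y`, each of the three blocks
satisfies the staircase condition `X[i] ~ Y[j]` for `j ≤ i`, which is all an interleaving needs to
be a path.
-/

open SimpleGraph Finset

variable {V : Type*}

/-- `(A, B)` is a bipartition of the graph `G`. -/
def IsBipartitionOf (G : SimpleGraph V) (A B : Finset V) : Prop :=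
  Disjoint A B ∧ (∀ v : V, v ∈ A ∨ v ∈ B) ∧
    ∀ ⦃x y : V⦄, G.Adj x y → (x ∈ A ∧ y ∈ B) ∨ (x ∈ B ∧ y ∈ A)

/-- `G` has no induced path on `n` vertices. -/
def PFree (n : ℕ) (G : SimpleGraph V) : Prop :=
  ∀ f : Fin n → V, Function.Injective f →
    ¬ (∀ i j : Fin n, G.Adj (f i) (f j) ↔ ((i : ℕ) + 1 = (j : ℕ) ∨ (j : ℕ) + 1 = (i : ℕ)))

/-- Every cycle of length at least 6 has a chord. -/
def ChordalBipartite (G : SimpleGraph V) : Prop :=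
  ∀ (v : V) (c : G.Walk v v), c.IsCycle → 6 ≤ c.length →
    ∃ x y : V, x ∈ c.support ∧ y ∈ c.support ∧ G.Adj x y ∧ s(x, y) ∉ c.edges

/-- `(A1, B1)` is a maximal biclique of `G` within the bipartition `(A, B)`:
it is a complete bipartite subgraph and no vertex can be added to either side. -/
def IsMaximalBiclique (G : SimpleGraph V) (A B A1 B1 : Finset V) : Prop :=
  A1 ⊆ A ∧ B1 ⊆ B ∧ (∀ x ∈ A1, ∀ y ∈ B1, G.Adj x y) ∧
    (∀ x ∈ A, (∀ y ∈ B1, G.Adj x y) → x ∈ A1) ∧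
    (∀ y ∈ B, (∀ x ∈ A1, G.Adj x y) → y ∈ B1)

theorem SimpleGraph.Walk.dist_getVert_of_length_eq_dist {G : SimpleGraph V} {u v : V}
    {p : G.Walk u v} (hp : p.length = G.dist u v) {i : ℕ} (hi : i ≤ p.length) :
    G.dist u (p.getVert i) = i := by
  have hle : G.dist u (p.getVert i) ≤ i := by
    simpa [Walk.take_length, hi] using dist_le (p.take i)
  have hrest : G.dist (p.getVert i) v ≤ p.length - i := by
    simpa [Walk.drop_length] using dist_le (p.drop i)
  have := (p.take i).reachable.dist_triangle_left v
  omega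

namespace PFree

variable {G : SimpleGraph V}

/-- The first `n + 2` vertices of a longer shortest path would form an induced path. -/
theorem dist_le {n : ℕ} (h : PFree (n + 2) G) (hconn : G.Connected) (x y : V) :
    G.dist x y ≤ n := by
  by_contra! hlt
  obtain ⟨p, hp⟩ := hconn.exists_walk_length_eq_dist x y
  have hdist (i : Fin (n + 2)) : G.dist x (p.getVert i) = i :=
    p.dist_getVert_of_length_eq_dist hp (by omega)
  refine h (fun i => p.getVert i) (fun i j hij => Fin.ext ?_) fun i j => ⟨fun hadj => ?_, ?_⟩
  · rw [← hdist i, ← hdist j]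
    exact congrArg _ hij
  · have hne : (i : ℕ) ≠ j := fun h => G.irrefl (by rwa [Fin.ext h] at hadj)
    have := hadj.diff_dist_adj (u := x)
    rw [hdist, hdist] at this
    omega
  · rintro (h | h)
    · simpa [← h] using p.adj_getVert_succ (i := i) (by omega)
    · simpa [← h] using (p.adj_getVert_succ (i := j) (by omega)).symm

theorem false_of_inducedPath5 (h : PFree 5 G) {a b c d e : V}
    (hab : G.Adj a b) (hbc : G.Adj b c) (hcd : G.Adj c d) (hde : G.Adj d e)
    (hac : ¬G.Adj a c) (had : ¬G.Adj a d) (hae : ¬G.Adj a e) (hbd : ¬G.Adj b d)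
    (hbe : ¬G.Adj b e) (hce : ¬G.Adj c e) : False := by
  refine h ![a, b, c, d, e] (fun i j hij => ?_) fun i j => ?_
  · fin_cases i <;> fin_cases j <;> simp at hij ⊢ <;> subst hij <;> simp_all [adj_comm]
  · fin_cases i <;> fin_cases j <;> simp_all [adj_comm]

end PFree

namespace IsBipartitionOf

variable {G : SimpleGraph V} {A B : Finset V} {x y : V}

theorem symm (h : IsBipartitionOf G A B) : IsBipartitionOf G B A :=
  ⟨h.1.symm, fun v => (h.2.1 v).symm, fun _ _ hadj => (h.2.2 hadj).symm⟩

theorem mem_right_of_adj (h : IsBipartitionOf G A B) (hx : x ∈ A) (hxy : G.Adj x y) :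
    y ∈ B := by
  rcases h.2.2 hxy with ⟨-, hy⟩ | ⟨hx', -⟩
  · exact hy
  · exact absurd hx (disjoint_right.mp h.1 hx')

theorem not_adj_of_mem_left (h : IsBipartitionOf G A B) (hx : x ∈ A) (hy : y ∈ A) :
    ¬G.Adj x y := fun hxy => disjoint_left.mp h.1 hy (h.mem_right_of_adj hx hxy)

theorem even_length (h : IsBipartitionOf G A B) (hx : x ∈ A) (hy : y ∈ A) (w : G.Walk x y) :
    Even w.length := by
  classical
  let c : G.Coloring Bool := Coloring.mk (fun v => decide (v ∈ A)) fun {v v'} hvv' => by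
    rcases h.2.2 hvv' with ⟨hv, hv'⟩ | ⟨hv, hv'⟩
    · simp [hv, disjoint_right.mp h.1 hv']
    · simp [hv', disjoint_right.mp h.1 hv]
  refine (c.even_length_iff_congr w).mpr ?_
  change decide (x ∈ A) = true ↔ decide (y ∈ A) = true
  simp [hx, hy]

theorem exists_adj_adj (h : IsBipartitionOf G A B) (hconn : G.Connected) (hp5 : PFree 5 G)
    (hx : x ∈ A) (hy : y ∈ A) (hxy : x ≠ y) : ∃ c, G.Adj x c ∧ G.Adj c y := by
  obtain ⟨w, hw⟩ := hconn.exists_walk_length_eq_dist x y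
  have hlen : w.length = 2 := by
    have := hp5.dist_le (n := 3) hconn x y
    have := hconn.pos_dist_of_ne hxy
    obtain ⟨k, hk⟩ := h.even_length hx hy w
    omega
  refine ⟨w.getVert 1, by simpa using w.adj_getVert_succ (i := 0) (by omega), ?_⟩
  simpa [show 1 + 1 = w.length by omega] using w.adj_getVert_succ (i := 1) (by omega)

/-- Otherwise `b - x - c - y - b'`, with `b ∈ N(x) \ N(y)`, `b' ∈ N(y) \ N(x)` and `c` a common
neighbour of `x` and `y`, is an induced `P₅`. -/
theorem neighborFinset_subset_or_subset [Fintype V] [DecidableRel G.Adj]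
    (h : IsBipartitionOf G A B) (hconn : G.Connected) (hp5 : PFree 5 G) (hx : x ∈ A)
    (hy : y ∈ A) :
    G.neighborFinset x ⊆ G.neighborFinset y ∨ G.neighborFinset y ⊆ G.neighborFinset x := by
  by_contra! hcon
  obtain ⟨b, hbx, hby⟩ := not_subset.mp hcon.1
  obtain ⟨b', hb'y, hb'x⟩ := not_subset.mp hcon.2
  simp only [mem_neighborFinset] at hbx hby hb'y hb'x
  obtain ⟨c, hxc, hcy⟩ := h.exists_adj_adj hconn hp5 hx hy (by rintro rfl; exact hby hbx)
  have hB {s t : V} (hs : s ∈ B) (ht : t ∈ B) : ¬G.Adj s t := h.symm.not_adj_of_mem_left hs ht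
  exact hp5.false_of_inducedPath5 hbx.symm hxc hcy hb'y
    (hB (h.mem_right_of_adj hx hbx) (h.mem_right_of_adj hx hxc)) (mt G.adj_symm hby)
    (hB (h.mem_right_of_adj hx hbx) (h.mem_right_of_adj hy hb'y))
    (h.not_adj_of_mem_left hx hy) hb'x
    (hB (h.mem_right_of_adj hx hxc) (h.mem_right_of_adj hy hb'y))

end IsBipartitionOf

namespace IsMaximalBiclique

variable {G : SimpleGraph V} {A B A1 B1 : Finset V}

theorem symm (h : IsMaximalBiclique G A B A1 B1) : IsMaximalBiclique G B A B1 A1 :=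
  ⟨h.2.1, h.1, fun y hy x hx => (h.2.2.1 x hx y hy).symm,
    fun y hy hall => h.2.2.2.2 y hy fun a ha => (hall a ha).symm,
    fun x hx hall => h.2.2.2.1 x hx fun b hb => (hall b hb).symm⟩

theorem neighborFinset_subset [Fintype V] [DecidableEq V] [DecidableRel G.Adj]
    (h : IsMaximalBiclique G A B A1 B1) (hbip : IsBipartitionOf G A B) (hconn : G.Connected)
    (hp5 : PFree 5 G) {x : V} (hx : x ∈ A \ A1) : G.neighborFinset x ⊆ B1 := by
  obtain ⟨hxA, hxA1⟩ := mem_sdiff.mp hx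
  intro b hb
  rw [mem_neighborFinset] at hb
  by_contra hbB1
  obtain ⟨a, ha, hab⟩ : ∃ a ∈ A1, ¬G.Adj a b := by
    by_contra! hall
    exact hbB1 (h.2.2.2.2 b (hbip.mem_right_of_adj hxA hb) hall)
  obtain ⟨b', hb', hxb'⟩ : ∃ b' ∈ B1, ¬G.Adj x b' := by
    by_contra! hall
    exact hxA1 (h.2.2.2.1 x hxA hall)
  rcases hbip.neighborFinset_subset_or_subset hconn hp5 hxA (h.1 ha) with hsub | hsub
  · exact hab (by simpa using hsub (by simpa using hb : b ∈ G.neighborFinset x))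
  · have hab' : b' ∈ G.neighborFinset a := by simpa using h.2.2.1 a ha b' hb'
    exact hxb' (by simpa using hsub hab')

end IsMaximalBiclique

namespace List

variable {α : Type*}

theorem forall_mem_take_countP {p : α → Bool} {l : List α}
    (h : l.Pairwise fun a b => p b → p a) : ∀ a ∈ l.take (l.countP p), p a := by
  induction l with
  | nil => simp
  | cons b l ih =>
    rw [pairwise_cons] at h
    by_cases hb : p b
    · simp only [countP_cons_of_pos hb, take_succ_cons, mem_cons]
      rintro a (rfl | ha)
      exacts [hb, ih h.2 a ha]
    · have : l.countP p = 0 := countP_eq_zero.mpr fun a ha hpa => hb (h.1 a ha hpa)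
      simp [countP_cons_of_neg hb, this]

variable [DecidableEq α]

theorem nodup_ofFn_and_toFinset_eq {n : ℕ} {f : Fin n → α} {S : Finset α}
    (hf : Function.Injective f) (hS : ∀ i, f i ∈ S) (hsurj : ∀ x ∈ S, ∃ i, f i = x) :
    (ofFn f).Nodup ∧ (ofFn f).toFinset = S := by
  refine ⟨nodup_ofFn.mpr hf, Finset.ext fun x => ?_⟩
  simp only [mem_toFinset, mem_ofFn]
  exact ⟨fun ⟨i, hi⟩ => hi ▸ hS i, hsurj x⟩

theorem nodup_append_and_toFinset_eq {l₁ l₂ : List α} {S T : Finset α}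
    (h₁ : l₁.Nodup ∧ l₁.toFinset = S \ T) (h₂ : l₂.Nodup ∧ l₂.toFinset = T)
    (hTS : T ⊆ S) :
    (l₁ ++ l₂).Nodup ∧ (l₁ ++ l₂).toFinset = S := by
  refine ⟨h₁.1.append h₂.1 (disjoint_toFinset_iff_disjoint.mp ?_), ?_⟩
  · rw [h₁.2, h₂.2]
    exact Finset.sdiff_disjoint
  · rw [toFinset_append, h₁.2, h₂.2, Finset.sdiff_union_of_subset hTS]

end List

namespace SimpleGraph

variable {G : SimpleGraph V}

section Degree

variable [Fintype V] [DecidableRel G.Adj]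

theorem exists_nodup_pairwise_neighborFinset_superset [DecidableEq V] {S : Finset V}
    (hnest : ∀ x ∈ S, ∀ y ∈ S,
      G.neighborFinset x ⊆ G.neighborFinset y ∨ G.neighborFinset y ⊆ G.neighborFinset x) :
    ∃ l : List V, l.Nodup ∧ l.toFinset = S ∧
      l.Pairwise fun x y => G.neighborFinset y ⊆ G.neighborFinset x := by
  let l := S.toList.mergeSort fun x y => decide (G.degree y ≤ G.degree x)
  have hperm : l.Perm S.toList := List.mergeSort_perm _ _
  have hsorted : l.Pairwise fun x y => decide (G.degree y ≤ G.degree x) :=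
    List.pairwise_mergeSort (by simp only [decide_eq_true_eq]; omega)
      (by simp only [Bool.or_eq_true, decide_eq_true_eq]; omega) _
  refine ⟨l, hperm.nodup_iff.mpr S.nodup_toList, by ext; simp [hperm.mem_iff], ?_⟩
  refine hsorted.imp_of_mem fun {x y} hx hy hdeg => ?_
  have hx : x ∈ S := by simpa using hperm.subset hx
  have hy : y ∈ S := by simpa using hperm.subset hy
  rcases hnest x hx y hy with hsub | hsub
  · rw [decide_eq_true_eq, ← card_neighborFinset_eq_degree,
      ← card_neighborFinset_eq_degree] at hdeg
    exact (eq_of_subset_of_card_le hsub hdeg).ge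
  · exact hsub

theorem adj_of_mem_take_degree [DecidableEq V] {l : List V} {x : V} (hl : l.Nodup)
    (hN : G.neighborFinset x ⊆ l.toFinset)
    (hpw : l.Pairwise fun y y' => G.neighborFinset y' ⊆ G.neighborFinset y) :
    ∀ y ∈ l.take (G.degree x), G.Adj x y := by
  have hfilter : l.toFinset.filter (G.Adj x ·) = G.neighborFinset x := by
    ext y
    simpa using fun hxy => List.mem_toFinset.mp (hN ((mem_neighborFinset _ _ _).mpr hxy))
  have hcount : l.countP (fun y => decide (G.Adj x y)) = G.degree x := by
    rw [List.countP_eq_length_filter, ← List.toFinset_card_of_nodup (hl.filter _),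
      List.toFinset_filter]
    simpa [← card_neighborFinset_eq_degree] using congrArg card hfilter
  have hdown : l.Pairwise fun y y' => decide (G.Adj x y') → decide (G.Adj x y) :=
    hpw.imp fun {y y'} hsub h => by
      simpa [adj_comm] using hsub ((mem_neighborFinset G y' x).mpr (by simpa [adj_comm] using h))
  simpa [hcount] using List.forall_mem_take_countP hdown

theorem le_card_of_lt_degree {n : ℕ} {f : Fin n → V} {S : Finset V}
    (hdeg : ∀ i : Fin n, (i : ℕ) < G.degree (f i)) (hN : ∀ i, G.neighborFinset (f i) ⊆ S) :
    n ≤ S.card := by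
  obtain _ | n := n
  · exact Nat.zero_le _
  · calc n + 1 ≤ G.degree (f (Fin.last n)) := by simpa using hdeg (Fin.last n)
      _ ≤ S.card := card_neighborFinset_eq_degree G _ ▸ card_le_card (hN _)

end Degree

def IsStaircase (G : SimpleGraph V) (X Y : List V) : Prop :=
  ∀ i j (hi : i < X.length) (hj : j < Y.length), j ≤ i → G.Adj X[i] Y[j]

theorem isStaircase_of_forall_adj {X Y : List V} (h : ∀ x ∈ X, ∀ y ∈ Y, G.Adj x y) :
    G.IsStaircase X Y :=
  fun _ _ _ _ _ => h _ (List.getElem_mem _) _ (List.getElem_mem _)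

theorem isStaircase_ofFn_take [Fintype V] [DecidableRel G.Adj] {n : ℕ} {f : Fin n → V}
    {l : List V} (hdeg : ∀ i : Fin n, (i : ℕ) < G.degree (f i))
    (hadj : ∀ i, ∀ y ∈ l.take (G.degree (f i)), G.Adj (f i) y) :
    G.IsStaircase (List.ofFn f) (l.take n) := by
  intro i j hi hj hji
  have hin : i < n := by simpa using hi
  have hjl : j < min n l.length := by simpa using hj
  have hdi : i < G.degree (f ⟨i, hin⟩) := hdeg ⟨i, hin⟩
  rw [List.getElem_ofFn, List.getElem_take]
  exact hadj _ _ (List.mem_take_iff_getElem.mpr ⟨j, by omega, rfl⟩)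

namespace IsStaircase

variable {X Y X₁ Y₁ X₂ Y₂ : List V}

theorem append (h₁ : G.IsStaircase X₁ Y₁) (h₂ : G.IsStaircase X₂ Y₂)
    (hcross : ∀ x ∈ X₂, ∀ y ∈ Y₁, G.Adj x y) (hlen : X₁.length = Y₁.length) :
    G.IsStaircase (X₁ ++ X₂) (Y₁ ++ Y₂) := by
  intro i j hi hj hji
  simp only [List.getElem_append]
  split_ifs with hi₁ hj₁ hj₁
  · exact h₁ i j hi₁ hj₁ hji
  · omega
  · exact hcross _ (List.getElem_mem _) _ (List.getElem_mem _)
  · simp only [List.length_append] at hi hj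
    exact h₂ _ _ (by omega) (by omega) (by omega)

theorem reverse (h : G.IsStaircase Y X) (hlen : X.length = Y.length) :
    G.IsStaircase X.reverse Y.reverse := by
  intro i j hi hj hji
  simp only [List.length_reverse] at hi hj
  simp only [List.getElem_reverse]
  exact (h _ _ (by omega) (by omega) (by omega)).symm

theorem isChain_interleave (h : G.IsStaircase X Y) (hlen : X.length = Y.length) :
    (X.interleave Y).IsChain G.Adj := by
  induction X generalizing Y with
  | nil => simp [List.length_eq_zero_iff.mp hlen.symm]
  | cons x X ih =>
    obtain _ | ⟨y, Y⟩ := Y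
    · simp at hlen
    have hshift : G.IsStaircase X Y := fun i j hi hj hji =>
      h (i + 1) (j + 1) (by simpa using hi) (by simpa using hj) (by omega)
    rw [List.cons_interleave, List.cons_interleave, List.isChain_cons_cons, List.isChain_cons]
    refine ⟨h 0 0 (by simp) (by simp) le_rfl, ?_, ih hshift (by simpa using hlen)⟩
    obtain _ | ⟨x', X⟩ := X
    · simp [List.length_eq_zero_iff.mp (by simpa using hlen.symm : Y.length = 0)]
    · simp only [List.cons_interleave, List.head?_cons, Option.mem_def, Option.some.injEq,
        forall_eq']
      exact (h 1 0 (by simp) (by simp) zero_le_one).symm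

theorem exists_isHamiltonian [DecidableEq V] [Nonempty V] (h : G.IsStaircase X Y)
    (hlen : X.length = Y.length) (hnodup : (X ++ Y).Nodup) (hmem : ∀ w, w ∈ X ++ Y) :
    ∃ (a b : V) (w : G.Walk a b), w.IsHamiltonian := by
  have hperm := List.interleave_perm_append (l₁ := X) (l₂ := Y)
  have hne : X.interleave Y ≠ [] :=
    List.ne_nil_of_mem (hperm.mem_iff.mpr (hmem (Classical.arbitrary V)))
  refine ⟨_, _, Walk.ofSupport _ hne (h.isChain_interleave hlen), fun w => ?_⟩
  rw [Walk.support_ofSupport]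
  exact List.count_eq_one_of_mem (hperm.nodup_iff.mpr hnodup) (hperm.mem_iff.mpr (hmem w))

end IsStaircase

/-- With `p = |lu|` and `q = |lv|`, the path interleaves
`X = lu ++ drop q la ++ reverse (take q la)` with `Y = take p lb ++ drop p lb ++ reverse lv`. -/
theorem exists_isHamiltonian_of_staircases [DecidableEq V] [Nonempty V] {A B : Finset V}
    (hbip : IsBipartitionOf G A B) (hcard : A.card = B.card) {lu la lb lv : List V}
    (hA : (lu ++ la).Nodup ∧ (lu ++ la).toFinset = A)
    (hB : (lv ++ lb).Nodup ∧ (lv ++ lb).toFinset = B)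
    (hu : G.IsStaircase lu (lb.take lu.length)) (hv : G.IsStaircase lv (la.take lv.length))
    (hab : ∀ a ∈ la, ∀ b ∈ lb, G.Adj a b) (hub : lu.length ≤ lb.length) :
    ∃ (a b : V) (w : G.Walk a b), w.IsHamiltonian := by
  set p := lu.length
  set q := lv.length
  have hlen : p + la.length = q + lb.length := by
    rw [← hA.2, ← hB.2, List.toFinset_card_of_nodup hA.1, List.toFinset_card_of_nodup hB.1]
      at hcard
    simpa using hcard
  have hX : List.Perm (lu ++ (la.drop q ++ (la.take q).reverse)) (lu ++ la) := by
    refine List.Perm.append_left lu (List.perm_append_comm.trans ?_)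
    exact ((List.reverse_perm _).append_right _).trans (.of_eq (List.take_append_drop q la))
  have hY : List.Perm (lb.take p ++ (lb.drop p ++ lv.reverse)) (lv ++ lb) := by
    rw [← List.append_assoc, List.take_append_drop]
    exact List.perm_append_comm.trans ((List.reverse_perm _).append_right _)
  have hXY := hX.append hY
  have hnodup : (lu ++ la ++ (lv ++ lb)).Nodup :=
    hA.1.append hB.1 (List.disjoint_toFinset_iff_disjoint.mp (hA.2 ▸ hB.2 ▸ hbip.1))
  have hmem (w : V) : w ∈ lu ++ la ++ (lv ++ lb) := by
    rcases hbip.2.1 w with hw | hw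
    · exact List.mem_append_left _ (List.mem_toFinset.mp (hA.2 ▸ hw))
    · exact List.mem_append_right _ (List.mem_toFinset.mp (hB.2 ▸ hw))
  refine IsStaircase.exists_isHamiltonian ?_ ?_ (hXY.nodup_iff.mpr hnodup)
    fun w => hXY.mem_iff.mpr (hmem w)
  · refine hu.append ((isStaircase_of_forall_adj ?_).append (hv.reverse ?_) ?_ ?_) ?_ ?_
    · exact fun x hx y hy => hab x (List.mem_of_mem_drop hx) y (List.mem_of_mem_drop hy)
    · simp only [List.length_take]
      omega
    · exact fun x hx y hy => hab x (List.mem_of_mem_take (List.mem_reverse.mp hx)) y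
        (List.mem_of_mem_drop hy)
    · simp only [List.length_drop]
      omega
    · intro x hx y hy
      refine hab x ?_ y (List.mem_of_mem_take hy)
      rcases List.mem_append.mp hx with hx | hx
      exacts [List.mem_of_mem_drop hx, List.mem_of_mem_take (List.mem_reverse.mp hx)]
    · simp only [List.length_take]
      omega
  · simp only [List.length_append, List.length_drop, List.length_reverse, List.length_take]
    omega

end SimpleGraph

theorem stmt10_general [Fintype V] [DecidableEq V] (G : SimpleGraph V) [DecidableRel G.Adj]
    (A B A1 B1 : Finset V) {p q : ℕ} (u : Fin p → V) (v : Fin q → V)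
    (hconn : G.Connected) (hbip : IsBipartitionOf G A B)
    (hp5 : PFree 5 G)
    (hmax : IsMaximalBiclique G A B A1 B1)
    -- `u` enumerates `A \ A1` in non-decreasing degree order (NNO)
    (hu : Function.Injective u) (huA : ∀ i, u i ∈ A \ A1)
    (huAll : ∀ x ∈ A \ A1, ∃ i, u i = x)
    -- `v` enumerates `B \ B1` in non-decreasing degree order (NNO)
    (hv : Function.Injective v) (hvB : ∀ j, v j ∈ B \ B1)
    (hvAll : ∀ y ∈ B \ B1, ∃ j, v j = y)
    (hcard : A.card = B.card)
    (hdu : ∀ g : Fin p, (g : ℕ) + 1 ≤ G.degree (u g))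
    (hdv : ∀ h : Fin q, (h : ℕ) + 1 ≤ G.degree (v h)) :
    ∃ (a b : V) (w : G.Walk a b), w.IsHamiltonian := by
  have := hconn.nonempty
  obtain ⟨la, hla, hlaA1, hla_nested⟩ := exists_nodup_pairwise_neighborFinset_superset
    fun x hx y hy => hbip.neighborFinset_subset_or_subset hconn hp5 (hmax.1 hx) (hmax.1 hy)
  obtain ⟨lb, hlb, hlbB1, hlb_nested⟩ := exists_nodup_pairwise_neighborFinset_superset
    fun x hx y hy =>
      hbip.symm.neighborFinset_subset_or_subset hconn hp5 (hmax.2.1 hx) (hmax.2.1 hy)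
  have hNu (i : Fin p) : G.neighborFinset (u i) ⊆ lb.toFinset :=
    hlbB1 ▸ hmax.neighborFinset_subset hbip hconn hp5 (huA i)
  have hNv (j : Fin q) : G.neighborFinset (v j) ⊆ la.toFinset :=
    hlaA1 ▸ hmax.symm.neighborFinset_subset hbip.symm hconn hp5 (hvB j)
  have hustair : G.IsStaircase (List.ofFn u) (lb.take p) :=
    isStaircase_ofFn_take hdu fun i => adj_of_mem_take_degree hlb (hNu i) hlb_nested
  have hvstair : G.IsStaircase (List.ofFn v) (la.take q) :=
    isStaircase_ofFn_take hdv fun j => adj_of_mem_take_degree hla (hNv j) hla_nested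
  have hab (a : V) (ha : a ∈ la) (b : V) (hb : b ∈ lb) : G.Adj a b :=
    hmax.2.2.1 a (hlaA1 ▸ List.mem_toFinset.mpr ha) b (hlbB1 ▸ List.mem_toFinset.mpr hb)
  refine exists_isHamiltonian_of_staircases hbip hcard
    (List.nodup_append_and_toFinset_eq (List.nodup_ofFn_and_toFinset_eq hu huA huAll)
      ⟨hla, hlaA1⟩ hmax.1)
    (List.nodup_append_and_toFinset_eq (List.nodup_ofFn_and_toFinset_eq hv hvB hvAll)
      ⟨hlb, hlbB1⟩ hmax.2.1)
    (by simpa using hustair) (by simpa using hvstair) hab ?_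
  simpa [List.toFinset_card_of_nodup hlb] using le_card_of_lt_degree hdu hNu

theorem stmt10 [Fintype V] [DecidableEq V] (G : SimpleGraph V) [DecidableRel G.Adj]
    (A B A1 B1 : Finset V) {p q : ℕ} (u : Fin p → V) (v : Fin q → V)
    (hconn : G.Connected) (hbip : IsBipartitionOf G A B)
    (hcb : ChordalBipartite G) (hp5 : PFree 5 G)
    (hmax : IsMaximalBiclique G A B A1 B1)
    -- `u` enumerates `A \ A1` in non-decreasing degree order (NNO)
    (hu : Function.Injective u) (huA : ∀ i, u i ∈ A \ A1)
    (huAll : ∀ x ∈ A \ A1, ∃ i, u i = x)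
    (humono : ∀ i j : Fin p, i ≤ j → G.degree (u i) ≤ G.degree (u j))
    -- `v` enumerates `B \ B1` in non-decreasing degree order (NNO)
    (hv : Function.Injective v) (hvB : ∀ j, v j ∈ B \ B1)
    (hvAll : ∀ y ∈ B \ B1, ∃ j, v j = y)
    (hvmono : ∀ i j : Fin q, i ≤ j → G.degree (v i) ≤ G.degree (v j))
    (hcard : A.card = B.card)
    (hdu : ∀ g : Fin p, (g : ℕ) + 1 ≤ G.degree (u g))
    (hdv : ∀ h : Fin q, (h : ℕ) + 1 ≤ G.degree (v h)) :
    ∃ (a b : V) (w : G.Walk a b), w.IsHamiltonian :=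
  stmt10_general G A B A1 B1 u v hconn hbip hp5 hmax hu huA huAll hv hvB hvAll hcard hdu hdv
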